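/- For every n ≥ 1, the product over all b with 0 ≤ b < 2^n of the rationals 3^(m(b,n))/2^n equals (3/4)^(n * 2^(n-1)). -/

import Mathlib

def T (N : ℕ) : ℕ := if N % 2 = 0 then N / 2 else (3 * N + 1) / 2

def m (b n : ℕ) : ℕ := ((Finset.range n).filter (fun k => Odd (T^[k] b))).card

/-
Let S n = ∑_{b < 2^n} m(b, n). One Collatz step sends 2a to a and 2a + 1 to 3a + 2, and
m(b, n + 1) = m(T b, n) + [b odd]. Because T maps residues mod 2^(t+1) to residues mod 2^t,
m(·, n) only depends on b mod 2^n, and a ↦ 3a + 2 permutes the residues mod 2^n. Hence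
S (n + 1) = 2 S n + 2^n, so S n = n 2^(n-1), and K_n = 3^(S n) / 2^(n 2^n) = (3/4)^(n 2^(n-1)).
-/

open Finset

theorem T_two_mul (a : ℕ) : T (2 * a) = a := by
  simp [T]

theorem T_two_mul_add_one (a : ℕ) : T (2 * a + 1) = 3 * a + 2 := by
  simp only [T]
  rw [if_neg (by omega)]
  omega

theorem T_modEq {t b b' : ℕ} (h : b ≡ b' [MOD 2 ^ (t + 1)]) : T b ≡ T b' [MOD 2 ^ t] := by
  have hpar : b % 2 = b' % 2 := h.of_dvd (dvd_pow_self 2 t.succ_ne_zero)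
  rw [pow_succ'] at h
  obtain ⟨a, rfl | rfl⟩ := Nat.even_or_odd' b <;>
    obtain ⟨a', rfl | rfl⟩ := Nat.even_or_odd' b' <;> try omega
  · rw [T_two_mul, T_two_mul]
    exact Nat.ModEq.mul_left_cancel' two_ne_zero h
  · have ha : a ≡ a' [MOD 2 ^ t] :=
      Nat.ModEq.mul_left_cancel' two_ne_zero (h.add_right_cancel' 1)
    rw [T_two_mul_add_one, T_two_mul_add_one]
    exact (ha.mul_left 3).add_right 2

theorem iterate_T_modEq (j s : ℕ) {b b' : ℕ} (h : b ≡ b' [MOD 2 ^ (j + s)]) :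
    T^[j] b ≡ T^[j] b' [MOD 2 ^ s] := by
  induction j generalizing b b' with
  | zero => simpa using h
  | succ j ih =>
    rw [Nat.add_right_comm] at h
    exact ih (T_modEq h)

theorem m_eq_of_modEq {n b b' : ℕ} (h : b ≡ b' [MOD 2 ^ n]) : m b n = m b' n := by
  refine congrArg card (filter_congr fun k hk => ?_)
  obtain ⟨s, rfl⟩ := Nat.exists_eq_add_of_lt (mem_range.mp hk)
  have h2 : T^[k] b ≡ T^[k] b' [MOD 2] :=
    (iterate_T_modEq k (s + 1) (by rwa [← add_assoc])).of_dvd (dvd_pow_self 2 s.succ_ne_zero)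
  rw [Nat.odd_iff, Nat.odd_iff, show T^[k] b % 2 = T^[k] b' % 2 from h2]

theorem m_succ (b n : ℕ) : m b (n + 1) = m (T b) n + if Odd b then 1 else 0 := by
  simp only [m, card_filter, sum_range_succ', Function.iterate_succ_apply,
    Function.iterate_zero_apply]
  rfl

theorem sum_range_two_mul {M : Type*} [AddCommMonoid M] (f : ℕ → M) (n : ℕ) :
    ∑ b ∈ range (2 * n), f b = ∑ a ∈ range n, (f (2 * a) + f (2 * a + 1)) := by
  induction n with
  | zero => simp
  | succ n ih => rw [Nat.mul_succ, sum_range_succ, sum_range_succ, sum_range_succ, ih, add_assoc]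

theorem sum_range_affine_mod {M : Type*} [AddCommMonoid M] (g : ℕ → M) {a N : ℕ}
    (ha : a.Coprime N) (c : ℕ) :
    ∑ x ∈ range N, g ((a * x + c) % N) = ∑ x ∈ range N, g x := by
  have hmaps : Set.MapsTo (fun x => (a * x + c) % N) (range N) (range N) := fun x hx =>
    mem_range.mpr (Nat.mod_lt _ (Nat.pos_of_ne_zero (by rintro rfl; simp at hx)))
  have hinj : Set.InjOn (fun x => (a * x + c) % N) (range N) := fun x hx y hy hxy =>
    ((Nat.ModEq.add_right_cancel' c hxy).cancel_left_of_coprime ha.symm).eq_of_lt_of_lt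
      (mem_range.mp hx) (mem_range.mp hy)
  have hbij := ((range N).finite_toSet.injOn_iff_bijOn_of_mapsTo hmaps).mp hinj
  exact sum_nbij _ (fun x hx => hmaps hx) hinj hbij.surjOn (fun _ _ => rfl)

theorem sum_m_succ (n : ℕ) :
    ∑ b ∈ range (2 ^ (n + 1)), m b (n + 1) = 2 * ∑ b ∈ range (2 ^ n), m b n + 2 ^ n := by
  have hcop : Nat.Coprime 3 (2 ^ n) := Nat.Coprime.pow_right _ (by decide)
  calc ∑ b ∈ range (2 ^ (n + 1)), m b (n + 1)
      = ∑ a ∈ range (2 ^ n), (m a n + (m ((3 * a + 2) % 2 ^ n) n + 1)) := by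
        rw [pow_succ', sum_range_two_mul]
        refine sum_congr rfl fun a _ => ?_
        rw [m_succ, m_succ, T_two_mul, T_two_mul_add_one,
          m_eq_of_modEq (Nat.mod_modEq (3 * a + 2) (2 ^ n)).symm,
          if_neg (Nat.not_odd_iff_even.mpr (even_two_mul a)), if_pos (odd_two_mul_add_one a),
          add_zero]
    _ = 2 * ∑ b ∈ range (2 ^ n), m b n + 2 ^ n := by
        rw [sum_add_distrib, sum_add_distrib, sum_range_affine_mod (fun x => m x n) hcop]
        simp [two_mul, add_assoc]

theorem two_mul_sum_m (n : ℕ) : 2 * ∑ b ∈ range (2 ^ n), m b n = n * 2 ^ n := by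
  induction n with
  | zero => simp [m]
  | succ n ih => rw [sum_m_succ, mul_add, ih, pow_succ]; ring

theorem stmt6 : ∀ n ≥ 1,
    ∏ b ∈ Finset.range (2 ^ n), ((3 : ℚ) ^ m b n / 2 ^ n) = (3 / 4 : ℚ) ^ (n * 2 ^ (n - 1)) := by
  intro n hn
  obtain ⟨k, rfl⟩ := Nat.exists_eq_add_of_le' hn
  have hsum : ∑ b ∈ range (2 ^ (k + 1)), m b (k + 1) = (k + 1) * 2 ^ k := by
    refine Nat.eq_of_mul_eq_mul_left two_pos ?_
    rw [two_mul_sum_m, pow_succ]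
    ring
  rw [prod_div_distrib, prod_pow_eq_pow_sum, hsum, prod_const, card_range, Nat.add_sub_cancel,
    div_pow, ← pow_mul, show (4 : ℚ) = 2 ^ 2 by norm_num, ← pow_mul]
  ring_nf
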